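/- Let G be a connected graph on n ≥ 2 vertices. Then λ₁(D(G)) ≤ √(2(n−1)W⁽²⁾(G)/n), with equality if and only if G is the complete graph K_n, where W⁽²⁾(G) = Σ_{i<j} d_{ij}(G)² is the sum of the squares of the distances between all unordered pairs of vertices. -/

import Mathlib

open SimpleGraph Finset

/-- The distance matrix of a graph: the `(i,j)` entry is the graph distance from `i` to `j`. -/
noncomputable def distMatrix {V : Type*} [Fintype V] (G : SimpleGraph V) : Matrix V V ℝ :=
  fun i j => (G.dist i j : ℝ)

/-- The distance spectral radius `λ₁(D(G))`: the largest eigenvalue of the distance matrix. -/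
noncomputable def distSpecRad {V : Type*} [Fintype V] (G : SimpleGraph V) : ℝ :=
  sSup {μ : ℝ | ∃ v : V → ℝ, v ≠ 0 ∧ (distMatrix G).mulVec v = μ • v}

/-- The join `G ∨ H` of two graphs: all edges between the parts are added. -/
def graphJoin {α β : Type*} (G : SimpleGraph α) (H : SimpleGraph β) :
    SimpleGraph (α ⊕ β) where
  Adj x y :=
    match x, y with
    | Sum.inl a, Sum.inl a' => G.Adj a a'
    | Sum.inr b, Sum.inr b' => H.Adj b b'
    | Sum.inl _, Sum.inr _ => True
    | Sum.inr _, Sum.inl _ => True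
  symm := ⟨by rintro (a | a) (b | b) h <;> first | exact G.symm h | exact H.symm h | exact G.adj_symm h | exact H.adj_symm h | trivial⟩
  loopless := ⟨by rintro (a | a) h <;> first | exact G.loopless a h | exact H.loopless a h | exact G.irrefl h | exact H.irrefl h⟩

/-- The disjoint union `G + H` of two graphs. -/
def graphSum {α β : Type*} (G : SimpleGraph α) (H : SimpleGraph β) :
    SimpleGraph (α ⊕ β) where
  Adj x y :=
    match x, y with
    | Sum.inl a, Sum.inl a' => G.Adj a a'
    | Sum.inr b, Sum.inr b' => H.Adj b b'
    | _, _ => False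
  symm := ⟨by rintro (a | a) (b | b) h <;> first | exact G.symm h | exact H.symm h | exact G.adj_symm h | exact H.adj_symm h | exact h⟩
  loopless := ⟨by rintro (a | a) h <;> first | exact G.loopless a h | exact H.loopless a h | exact G.irrefl h | exact H.irrefl h⟩

/-- `m` pairwise disjoint copies of the complete graph `K_p`. -/
def repK (m p : ℕ) : SimpleGraph (Fin m × Fin p) where
  Adj x y := x.1 = y.1 ∧ x ≠ y
  symm := ⟨fun _ _ h => ⟨h.1.symm, h.2.symm⟩⟩
  loopless := ⟨fun _ h => h.2 rfl⟩

/-- The disjoint union of cliques `K_{m 0} + K_{m 1} + ⋯`. -/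
def cliquesGraph {c : ℕ} (m : Fin c → ℕ) : SimpleGraph (Σ i, Fin (m i)) where
  Adj x y := x.1 = y.1 ∧ x ≠ y
  symm := ⟨fun _ _ h => ⟨h.1.symm, h.2.symm⟩⟩
  loopless := ⟨fun _ h => h.2 rfl⟩

/-- `G` is `t`-tough: whenever deleting a vertex set `S` disconnects the graph,
`|S| ≥ t · c(G - S)`. -/
def IsTTough {V : Type*} [Fintype V] (t : ℝ) (G : SimpleGraph V) : Prop :=
  ∀ S : Finset V, ¬ (G.induce ((S : Set V)ᶜ)).Connected →
    t * Nat.card (G.induce ((S : Set V)ᶜ)).ConnectedComponent ≤ (S.card : ℝ)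

/-- `W⁽²⁾(G) = Σ_{i<j} d(i,j)²`, i.e. half the sum of all squared distances. -/
noncomputable def wienerIndexSq {V : Type*} [Fintype V] (G : SimpleGraph V) : ℝ :=
  (∑ i, ∑ j, (G.dist i j : ℝ) ^ 2) / 2

/-!
The distance matrix `D` is symmetric with zero diagonal, so its eigenvalues satisfy
`∑ λᵢ = tr D = 0` and `∑ λᵢ² = tr D² = 2 W⁽²⁾`. Hence `λ₁ = -∑_{i ≥ 2} λᵢ`, and
Cauchy–Schwarz yields `λ₁² ≤ (n - 1) (2 W⁽²⁾ - λ₁²)`, which is the bound.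
In the equality case all the other eigenvalues equal a common `μ`, so `D - μ I` has rank one and
`d(u,v)² = (D_uu - μ)(D_vv - μ) = μ²` for all `u ≠ v`: all distances are equal, hence equal to `1`
in a connected graph.
-/

section SumEqZero

variable {ι : Type*} [Fintype ι] [DecidableEq ι] {x : ι → ℝ}

theorem card_mul_sq_le_of_sum_eq_zero (hx : ∑ i, x i = 0) (i₀ : ι) :
    Fintype.card ι * x i₀ ^ 2 ≤ (Fintype.card ι - 1) * ∑ i, x i ^ 2 := by
  have hcs := sq_sum_le_card_mul_sum_sq (s := univ.erase i₀) (f := x)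
  simp only [sum_erase_eq_sub (mem_univ i₀), hx, cast_card_erase_of_mem (mem_univ i₀),
    card_univ] at hcs
  linarith

theorem mul_eq_neg_of_card_mul_sq_eq (hx : ∑ i, x i = 0) (i₀ : ι)
    (heq : Fintype.card ι * x i₀ ^ 2 = (Fintype.card ι - 1) * ∑ i, x i ^ 2) (i : ι) (hi : i ≠ i₀) :
    (Fintype.card ι - 1) * x i = -x i₀ := by
  set m : ℝ := Fintype.card ι - 1
  have hsum : ∑ k ∈ univ.erase i₀, (m * x k + x i₀) ^ 2 = 0 := by
    have expand : ∀ k, (m * x k + x i₀) ^ 2 = m ^ 2 * x k ^ 2 + (2 * m * x i₀) * x k + x i₀ ^ 2 :=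
      fun k => by ring
    simp only [expand, sum_add_distrib, ← mul_sum, sum_const, nsmul_eq_mul,
      sum_erase_eq_sub (mem_univ i₀), hx, card_univ]
    linear_combination -m * heq
  have hterm := (sum_eq_zero_iff_of_nonneg fun k _ => sq_nonneg _).mp hsum i
    (mem_erase.mpr ⟨hi, mem_univ i⟩)
  linarith [pow_eq_zero_iff two_ne_zero |>.mp hterm]

end SumEqZero

namespace Matrix

theorem setOf_mulVec_eq_smul_eq_spectrum {K n : Type*} [Field K] [Fintype n] [DecidableEq n]
    (A : Matrix n n K) : {μ : K | ∃ v ≠ 0, A *ᵥ v = μ • v} = spectrum K A := by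
  ext μ
  rw [← spectrum_toLin', ← Module.End.hasEigenvalue_iff_mem_spectrum,
    Module.End.hasEigenvalue_iff, Submodule.ne_bot_iff]
  simp only [Module.End.mem_eigenspace_iff, toLin'_apply, and_comm]
  rfl

variable {n : Type*} [Fintype n] [DecidableEq n] {A : Matrix n n ℝ} (hA : A.IsHermitian)

theorem IsHermitian.trace_mul_self_eq_sum_eigenvalues_sq :
    (A * A).trace = ∑ i, hA.eigenvalues i ^ 2 := by
  conv_lhs => rw [hA.spectral_theorem, ← map_mul, Unitary.conjStarAlgAut_apply, trace_mul_cycle,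
    Unitary.coe_star_mul_self, one_mul, diagonal_mul_diagonal, trace_diagonal]
  simp [sq]

theorem IsHermitian.apply_eq_sum_eigenvalues_mul (i j : n) :
    A i j = ∑ k, hA.eigenvalues k * (hA.eigenvectorBasis k i * hA.eigenvectorBasis k j) := by
  conv_lhs => rw [hA.spectral_theorem, Unitary.conjStarAlgAut_apply]
  rw [mul_apply]
  refine sum_congr rfl fun k _ => ?_
  simp only [mul_diagonal, star_apply, Function.comp_apply, RCLike.ofReal_real_eq_id, id_eq,
    star_trivial, eigenvectorUnitary_apply]
  ring

theorem IsHermitian.sum_eigenvectorBasis_mul (i j : n) :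
    ∑ k, hA.eigenvectorBasis k i * hA.eigenvectorBasis k j = (1 : Matrix n n ℝ) i j := by
  simpa [mul_apply] using congrFun₂ (Unitary.coe_mul_star_self hA.eigenvectorUnitary) i j

theorem IsHermitian.apply_eq_of_eigenvalues_eq {μ : ℝ} {k₀ : n}
    (h : ∀ k ≠ k₀, hA.eigenvalues k = μ) (i j : n) :
    A i j = μ * (1 : Matrix n n ℝ) i j + (hA.eigenvalues k₀ - μ) *
      (hA.eigenvectorBasis k₀ i * hA.eigenvectorBasis k₀ j) := by
  rw [hA.apply_eq_sum_eigenvalues_mul, ← hA.sum_eigenvectorBasis_mul, mul_sum,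
    ← sum_erase_add _ _ (mem_univ k₀), ← sum_erase_add _ _ (mem_univ k₀)]
  have hrest : ∀ k ∈ univ.erase k₀, hA.eigenvalues k = μ := fun k hk => h k (ne_of_mem_erase hk)
  rw [sum_congr rfl fun k hk => by rw [hrest k hk]]
  ring

theorem IsHermitian.sq_apply_eq_of_eigenvalues_eq {μ : ℝ} {k₀ : n}
    (h : ∀ k ≠ k₀, hA.eigenvalues k = μ) {i j : n} (hij : i ≠ j) :
    A i j ^ 2 = (A i i - μ) * (A j j - μ) := by
  simp only [hA.apply_eq_of_eigenvalues_eq h, one_apply_eq, one_apply_ne hij]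
  ring

end Matrix

theorem SimpleGraph.Preconnected.eq_top_of_sq_dist_eq {V : Type*} [Nontrivial V]
    {G : SimpleGraph V} (hG : G.Preconnected) {c : ℝ}
    (h : ∀ u v, u ≠ v → (G.dist u v : ℝ) ^ 2 = c) : G = ⊤ := by
  obtain ⟨a, b, hab⟩ : ∃ a b, G.Adj a b :=
    ⟨_, hG.exists_adj_of_nontrivial (Classical.arbitrary V)⟩
  have hc : c = 1 := by simpa [dist_eq_one_iff_adj.mpr hab] using (h a b hab.ne).symm
  ext u v
  refine ⟨Adj.ne, fun huv => dist_eq_one_iff_adj.mp ?_⟩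
  have hd := h u v huv
  rw [hc, pow_eq_one_iff_of_nonneg (by positivity) two_ne_zero] at hd
  exact_mod_cast hd

open Matrix

section DistanceMatrix

variable {V : Type*} [Fintype V]

theorem distMatrix_isHermitian (G : SimpleGraph V) : (distMatrix G).IsHermitian :=
  IsHermitian.ext fun i j => by simp [distMatrix, G.dist_comm]

theorem trace_distMatrix (G : SimpleGraph V) : (distMatrix G).trace = 0 := by
  simp [trace, distMatrix]

theorem trace_distMatrix_mul_self (G : SimpleGraph V) :
    (distMatrix G * distMatrix G).trace = 2 * wienerIndexSq G := by
  rw [wienerIndexSq, mul_div_cancel₀ _ two_ne_zero]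
  exact sum_congr rfl fun i _ => sum_congr rfl fun j _ => by simp [distMatrix, G.dist_comm, sq]

theorem distSpecRad_eq_sSup_spectrum [DecidableEq V] (G : SimpleGraph V) :
    distSpecRad G = sSup (spectrum ℝ (distMatrix G)) := by
  rw [distSpecRad, setOf_mulVec_eq_smul_eq_spectrum]

theorem le_distSpecRad {G : SimpleGraph V} {μ : ℝ} {v : V → ℝ} (hv : v ≠ 0)
    (h : distMatrix G *ᵥ v = μ • v) : μ ≤ distSpecRad G := by
  classical
  refine le_csSup ?_ ⟨v, hv, h⟩
  rw [setOf_mulVec_eq_smul_eq_spectrum]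
  exact finite_real_spectrum.bddAbove

theorem exists_distSpecRad_eq_eigenvalue [DecidableEq V] [Nonempty V] (G : SimpleGraph V) :
    ∃ k, distSpecRad G = (distMatrix_isHermitian G).eigenvalues k := by
  rw [distSpecRad_eq_sSup_spectrum, (distMatrix_isHermitian G).spectrum_real_eq_range_eigenvalues]
  obtain ⟨k, hk⟩ :=
    (Set.range_nonempty (distMatrix_isHermitian G).eigenvalues).csSup_mem (Set.finite_range _)
  exact ⟨k, hk.symm⟩

theorem sum_eigenvalues_distMatrix [DecidableEq V] (G : SimpleGraph V) :
    ∑ k, (distMatrix_isHermitian G).eigenvalues k = 0 := by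
  simpa [trace_distMatrix] using ((distMatrix_isHermitian G).trace_eq_sum_eigenvalues).symm

theorem sum_sq_eigenvalues_distMatrix [DecidableEq V] (G : SimpleGraph V) :
    ∑ k, (distMatrix_isHermitian G).eigenvalues k ^ 2 = 2 * wienerIndexSq G := by
  rw [← (distMatrix_isHermitian G).trace_mul_self_eq_sum_eigenvalues_sq, trace_distMatrix_mul_self]

theorem distSpecRad_le_sqrt [Nonempty V] (G : SimpleGraph V) :
    distSpecRad G ≤
      √(2 * ((Fintype.card V : ℝ) - 1) * wienerIndexSq G / Fintype.card V) := by
  classical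
  obtain ⟨k, hk⟩ := exists_distSpecRad_eq_eigenvalue G
  have hbound := card_mul_sq_le_of_sum_eq_zero (sum_eigenvalues_distMatrix G) k
  rw [sum_sq_eigenvalues_distMatrix] at hbound
  rw [hk]
  refine (le_abs_self _).trans (Real.abs_le_sqrt ?_)
  rw [le_div_iff₀ (by positivity)]
  linarith

theorem eq_top_of_distSpecRad_eq_sqrt [Nontrivial V] {G : SimpleGraph V} (hG : G.Preconnected)
    (h : distSpecRad G =
      √(2 * ((Fintype.card V : ℝ) - 1) * wienerIndexSq G / Fintype.card V)) :
    G = ⊤ := by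
  classical
  set hD := distMatrix_isHermitian G
  obtain ⟨k₀, hk₀⟩ := exists_distSpecRad_eq_eigenvalue G
  have hn : (1 : ℝ) < Fintype.card V := by exact_mod_cast Fintype.one_lt_card
  have hW : 0 ≤ wienerIndexSq G := by unfold wienerIndexSq; positivity
  have heq : Fintype.card V * hD.eigenvalues k₀ ^ 2 =
      (Fintype.card V - 1) * ∑ k, hD.eigenvalues k ^ 2 := by
    rw [sum_sq_eigenvalues_distMatrix, ← hk₀, h, Real.sq_sqrt (by positivity)]
    field_simp
  have hrest : ∀ k ≠ k₀, hD.eigenvalues k = -hD.eigenvalues k₀ / (Fintype.card V - 1) :=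
    fun k hk => by
      rw [eq_div_iff (by linarith), mul_comm]
      exact mul_eq_neg_of_card_mul_sq_eq (sum_eigenvalues_distMatrix G) k₀ heq k hk
  refine hG.eq_top_of_sq_dist_eq (c := (hD.eigenvalues k₀ / (Fintype.card V - 1)) ^ 2)
    fun u v huv => ?_
  have hd := hD.sq_apply_eq_of_eigenvalues_eq hrest huv
  simp only [distMatrix, dist_self, Nat.cast_zero, zero_sub] at hd
  rw [hd]
  ring

theorem SimpleGraph.sum_dist_top [DecidableEq V] [Nonempty V] (u : V) :
    ∑ v, ((⊤ : SimpleGraph V).dist u v : ℝ) = Fintype.card V - 1 := by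
  simp [dist_top, sum_ite, filter_ne, Nat.cast_pred Fintype.card_pos]

theorem wienerIndexSq_top [Nonempty V] :
    wienerIndexSq (⊤ : SimpleGraph V) = Fintype.card V * (Fintype.card V - 1) / 2 := by
  classical
  have hsq : ∀ u v, ((⊤ : SimpleGraph V).dist u v : ℝ) ^ 2 = (⊤ : SimpleGraph V).dist u v :=
    fun u v => by by_cases huv : u = v <;> simp [dist_top, huv]
  simp only [wienerIndexSq, hsq, sum_dist_top, sum_const, card_univ, nsmul_eq_mul]

theorem sqrt_wienerIndexSq_bound_top [Nonempty V] :
    √(2 * ((Fintype.card V : ℝ) - 1) * wienerIndexSq (⊤ : SimpleGraph V) / Fintype.card V) =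
      Fintype.card V - 1 := by
  have hn : (1 : ℝ) ≤ Fintype.card V := by exact_mod_cast Fintype.card_pos
  have hn0 : (Fintype.card V : ℝ) ≠ 0 := by positivity
  have hsq : 2 * ((Fintype.card V : ℝ) - 1) * (Fintype.card V * (Fintype.card V - 1) / 2) /
      Fintype.card V = (Fintype.card V - 1) ^ 2 := by
    field_simp
  rw [wienerIndexSq_top, hsq, Real.sqrt_sq (sub_nonneg.mpr hn)]

theorem distMatrix_top_mulVec_one [Nonempty V] :
    distMatrix (⊤ : SimpleGraph V) *ᵥ 1 = ((Fintype.card V : ℝ) - 1) • 1 := by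
  classical
  ext u
  simp [mulVec, dotProduct, distMatrix, sum_dist_top]

theorem distSpecRad_top [Nonempty V] :
    distSpecRad (⊤ : SimpleGraph V) = Fintype.card V - 1 :=
  le_antisymm ((distSpecRad_le_sqrt ⊤).trans_eq sqrt_wienerIndexSq_bound_top)
    (le_distSpecRad one_ne_zero distMatrix_top_mulVec_one)

end DistanceMatrix

theorem stmt7 {V : Type*} [Fintype V] (G : SimpleGraph V) (hG : G.Connected)
    (hn : 2 ≤ Fintype.card V) :
    distSpecRad G ≤
      Real.sqrt (2 * ((Fintype.card V : ℝ) - 1) * wienerIndexSq G / (Fintype.card V : ℝ)) ∧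
    (distSpecRad G =
        Real.sqrt (2 * ((Fintype.card V : ℝ) - 1) * wienerIndexSq G / (Fintype.card V : ℝ))
      ↔ G = ⊤) := by
  have : Nontrivial V := Fintype.one_lt_card_iff_nontrivial.mp hn
  refine ⟨distSpecRad_le_sqrt G, eq_top_of_distSpecRad_eq_sqrt hG.preconnected, ?_⟩
  rintro rfl
  rw [distSpecRad_top, sqrt_wienerIndexSq_bound_top]
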